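/- arXiv:2004.12600 — 4 statements merged into one kernel-verified Lean document; each statement's English description precedes it below -/
import Mathlib

section
/- Fix an integer k. Let B_k be the poset of pairs (n,m) ∈ ℤ × ℤ with n + m ≥ k, and let A_k ⊆ B_k be the full subposet of pairs with k ≤ n + m ≤ k + 1, both equipped with the order (n,m) ⪯ (n',m') if and only if n' ≤ n and m' ≤ m. Then the inclusion functor from the poset category of A_k to the poset category of B_k is a final (colimit-cofinal) functor. -/
open CategoryTheory

/-- The poset `B_k` of pairs `(n,m) ∈ ℤ × ℤ` with `n + m ≥ k`. -/
def MayIndexB (k : ℤ) : Type := {p : ℤ × ℤ // k ≤ p.1 + p.2}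

/-- The poset `A_k` of pairs `(n,m) ∈ ℤ × ℤ` with `k ≤ n + m ≤ k + 1`. -/
def MayIndexA (k : ℤ) : Type := {p : ℤ × ℤ // k ≤ p.1 + p.2 ∧ p.1 + p.2 ≤ k + 1}

/-- The order `(n,m) ⪯ (n',m')` iff `n' ≤ n` and `m' ≤ m` (opposite of componentwise). -/
instance (k : ℤ) : Preorder (MayIndexB k) where
  le x y := y.1.1 ≤ x.1.1 ∧ y.1.2 ≤ x.1.2
  le_refl x := ⟨le_refl _, le_refl _⟩
  le_trans x y z h₁ h₂ := ⟨h₂.1.trans h₁.1, h₂.2.trans h₁.2⟩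

instance (k : ℤ) : Preorder (MayIndexA k) where
  le x y := y.1.1 ≤ x.1.1 ∧ y.1.2 ≤ x.1.2
  le_refl x := ⟨le_refl _, le_refl _⟩
  le_trans x y z h₁ h₂ := ⟨h₂.1.trans h₁.1, h₂.2.trans h₁.2⟩

/-- The inclusion functor `A_k ⥤ B_k`. -/
def mayIncl (k : ℤ) : MayIndexA k ⥤ MayIndexB k :=
  Monotone.functor (f := fun x => (⟨x.1, x.2.1⟩ : MayIndexB k)) (fun _ _ h => h)

/-!
An object of the comma category under `b = (b₁, b₂)` is a point `a ∈ A_k` lying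
componentwise below `b`. Lowering its second coordinate to `k - a₁` connects it to the point
`(a₁, k - a₁)` on the lower edge `n + m = k`, and consecutive lower-edge points `(p, k - p)` and
`(p + 1, k - p - 1)` are both reached from `(p + 1, k - p) ∈ A_k`. Walking right along the lower
edge therefore connects every object to `(b₁, k - b₁)`.
-/

namespace CategoryTheory.StructuredArrow

variable {A B : Type*} [Preorder A] [Preorder B] {F : A ⥤ B} {b : B}

def homOfRightLE {X Y : StructuredArrow b F} (h : X.right ≤ Y.right) : X ⟶ Y :=
  homMk (homOfLE h) (Subsingleton.elim _ _)

end CategoryTheory.StructuredArrow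

namespace MayIndexA

open StructuredArrow

variable {k : ℤ}

def arrow (b : MayIndexB k) (p q : ℤ) (hk : k ≤ p + q) (hk' : p + q ≤ k + 1)
    (hp : p ≤ b.1.1) (hq : q ≤ b.1.2) : StructuredArrow b (mayIncl k) :=
  mk (homOfLE (show b ≤ (mayIncl k).obj ⟨(p, q), hk, hk'⟩ from ⟨hp, hq⟩))

variable (b : MayIndexB k)

theorem zigzag_arrow_succ (p : ℤ) (hp : p + 1 ≤ b.1.1) (hq : k - p ≤ b.1.2) :
    Zigzag (arrow b p (k - p) (by omega) (by omega) (by omega) hq)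
      (arrow b (p + 1) (k - (p + 1)) (by omega) (by omega) hp (by omega)) :=
  Zigzag.of_inv_hom (j₂ := arrow b (p + 1) (k - p) (by omega) (by omega) hp hq)
    (homOfRightLE ⟨(lt_add_one p).le, le_rfl⟩)
    (homOfRightLE ⟨le_rfl, sub_le_sub_left (lt_add_one p).le k⟩)

theorem zigzag_arrow_of_le {p q : ℤ} (hpq : p ≤ q) (hq : q ≤ b.1.1) (hp : k - p ≤ b.1.2) :
    Zigzag (arrow b p (k - p) (by omega) (by omega) (by omega) hp)
      (arrow b q (k - q) (by omega) (by omega) hq (by omega)) := by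
  induction q, hpq using Int.leInduction with
  | base => rfl
  | succ q hpq ih =>
    exact (ih (by omega)).trans (zigzag_arrow_succ b q hq (by omega))

theorem zigzag_arrow_rightmost (X : StructuredArrow b (mayIncl k)) :
    Zigzag X (arrow b b.1.1 (k - b.1.1) (by omega) (by omega) le_rfl (by have := b.2; omega)) := by
  obtain ⟨hp, hq⟩ : X.right.1.1 ≤ b.1.1 ∧ X.right.1.2 ≤ b.1.2 := leOfHom X.hom
  have hX := X.right.2
  have toLowerEdge : X ⟶ arrow b X.right.1.1 (k - X.right.1.1) (by omega) (by omega) hp (by omega) :=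
    homOfRightLE ⟨le_rfl, show k - X.right.1.1 ≤ X.right.1.2 by omega⟩
  exact (Zigzag.of_hom toLowerEdge).trans (zigzag_arrow_of_le b hp le_rfl _)

end MayIndexA

/-- The inclusion `A_k ⊆ B_k` is a final (colimit-cofinal) functor. -/
theorem mayIncl_final (k : ℤ) : (mayIncl k).Final := by
  refine ⟨fun b => ?_⟩
  have hb := b.2
  have : Nonempty (StructuredArrow b (mayIncl k)) :=
    ⟨MayIndexA.arrow b b.1.1 (k - b.1.1) (by omega) (by omega) le_rfl (by omega)⟩
  exact zigzag_isConnected fun X Y =>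
    (MayIndexA.zigzag_arrow_rightmost b X).trans (MayIndexA.zigzag_arrow_rightmost b Y).symm
end

section
/- Let (C, ⊗, 𝟙) be a cocomplete symmetric monoidal category in which the tensor product preserves colimits separately in each variable. For n ∈ ℕ let S(n) ∈ Fun(ℕᵒᵖ, C) denote the tower whose value at k is the monoidal unit 𝟙 for k ≤ n and the initial object of C for k > n, with identity structure maps between the copies of 𝟙. Then for all n, m ∈ ℕ there is an isomorphism S(n) ⊛ S(m) ≅ S(n+m), where ⊛ denotes Day convolution. -/
open CategoryTheory CategoryTheory.Limits MonoidalCategory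

universe v u

variable (C : Type u) [Category.{v} C]

noncomputable def stepObj [HasInitial C] (X : C) (n : ℕ) (k : ℕᵒᵈ) : C :=
  if OrderDual.ofDual k ≤ n then X else ⊥_ C

theorem stepObj_pos [HasInitial C] (X : C) (n : ℕ) {k : ℕᵒᵈ} (h : OrderDual.ofDual k ≤ n) :
    stepObj C X n k = X := if_pos h

theorem stepObj_neg [HasInitial C] (X : C) (n : ℕ) {k : ℕᵒᵈ} (h : ¬ OrderDual.ofDual k ≤ n) :
    stepObj C X n k = ⊥_ C := if_neg h

noncomputable def stepMap [HasInitial C] (X : C) (n : ℕ) {k l : ℕᵒᵈ} (f : k ⟶ l) :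
    stepObj C X n k ⟶ stepObj C X n l :=
  if h : OrderDual.ofDual k ≤ n then
    eqToHom (by
      rw [stepObj_pos C X n h,
        stepObj_pos C X n ((leOfHom f : OrderDual.ofDual l ≤ OrderDual.ofDual k).trans h)])
  else
    eqToHom (stepObj_neg C X n h) ≫ initial.to _

theorem stepMap_id [HasInitial C] (X : C) (n : ℕ) (k : ℕᵒᵈ) :
    stepMap C X n (𝟙 k) = 𝟙 (stepObj C X n k) := by
  unfold stepMap
  by_cases h : OrderDual.ofDual k ≤ n
  · rw [dif_pos h]; simp
  · rw [dif_neg h, ← cancel_epi (eqToHom (stepObj_neg C X n h).symm)]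
    apply Subsingleton.elim

theorem stepMap_comp [HasInitial C] (X : C) (n : ℕ) {k l m : ℕᵒᵈ} (f : k ⟶ l) (g : l ⟶ m) :
    stepMap C X n (f ≫ g) = stepMap C X n f ≫ stepMap C X n g := by
  unfold stepMap
  by_cases hk : OrderDual.ofDual k ≤ n
  · have hl : OrderDual.ofDual l ≤ n :=
      (leOfHom f : OrderDual.ofDual l ≤ OrderDual.ofDual k).trans hk
    rw [dif_pos hk, dif_pos hk, dif_pos hl]
    simp
  · rw [dif_neg hk, dif_neg hk, ← cancel_epi (eqToHom (stepObj_neg C X n hk).symm)]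
    apply Subsingleton.elim

/-- The tower `S(n)` with value `X` in degrees `≤ n` (identity structure maps) and the
initial object in degrees `> n`. -/
noncomputable def stepTower [HasInitial C] (X : C) (n : ℕ) : ℕᵒᵈ ⥤ C where
  obj := stepObj C X n
  map := stepMap C X n
  map_id := stepMap_id C X n
  map_comp := stepMap_comp C X n

/-- The monoidal product (addition) `ℕᵒᵖ × ℕᵒᵖ ⥤ ℕᵒᵖ`. -/
def addFunctor : ℕᵒᵈ × ℕᵒᵈ ⥤ ℕᵒᵈ where
  obj p := OrderDual.toDual (OrderDual.ofDual p.1 + OrderDual.ofDual p.2)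
  map {x y} f := homOfLE (OrderDual.toDual_le_toDual.mpr
    (Nat.add_le_add (leOfHom f.1 : OrderDual.ofDual y.1 ≤ OrderDual.ofDual x.1)
      (leOfHom f.2 : OrderDual.ofDual y.2 ≤ OrderDual.ofDual x.2)))
  map_id _ := by dsimp; apply Subsingleton.elim
  map_comp _ _ := by dsimp; apply Subsingleton.elim

/-- The Day convolution of two towers: the left Kan extension of the external tensor
product `(n,m) ↦ X(n) ⊗ Y(m)` along addition, so that
`(X ⊛ Y)(k) = colim_{n+m ≥ k} X(n) ⊗ Y(m)`. -/
noncomputable def day [MonoidalCategory C] [HasColimits C] (X Y : ℕᵒᵈ ⥤ C) : ℕᵒᵈ ⥤ C :=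
  Functor.leftKanExtension addFunctor (X.prod Y ⋙ MonoidalCategory.tensor C)

/-!
On the region `p ≤ n, q ≤ m` the external tensor product `S(n)(p) ⊗ S(m)(q)` is constantly
`𝟙 ⊗ 𝟙 ≅ 𝟙` with invertible transition maps; off it one factor is initial, hence so is the
product. So for `k ≤ n + m` the colimit over `{(p, q) : p + q ≥ k}` is attained at `(n, m)`,
while for `k > n + m` every term is initial. Either way it is the value of `S(n + m)` at `k`, so
`S(n + m)` is a pointwise left Kan extension along addition. Of the values only an isomorphism
`X ⊗ Y ≅ Z` is used, so the argument works for towers with values `X`, `Y` and `Z`.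
-/

noncomputable section

variable {C}

theorem ofDual_le_ofDual_of_hom {α : Type*} [Preorder α] {k l : αᵒᵈ} (f : k ⟶ l) :
    OrderDual.ofDual l ≤ OrderDual.ofDual k :=
  leOfHom f

section StepTower

variable [HasInitial C] (X : C) (N : ℕ)

def stepTowerObjIso {k : ℕᵒᵈ} (h : OrderDual.ofDual k ≤ N) : (stepTower C X N).obj k ≅ X :=
  eqToIso (stepObj_pos C X N h)

theorem stepTower_map_eq {k l : ℕᵒᵈ} (f : k ⟶ l) (hk : OrderDual.ofDual k ≤ N)
    (hl : OrderDual.ofDual l ≤ N) :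
    (stepTower C X N).map f = (stepTowerObjIso X N hk).hom ≫ (stepTowerObjIso X N hl).inv := by
  simp [stepTower, stepMap, dif_pos hk, stepTowerObjIso]

theorem isIso_stepTower_map {k l : ℕᵒᵈ} (f : k ⟶ l) (hk : OrderDual.ofDual k ≤ N)
    (hl : OrderDual.ofDual l ≤ N) : IsIso ((stepTower C X N).map f) := by
  rw [stepTower_map_eq X N f hk hl]
  infer_instance

def isInitialStepTowerObj {k : ℕᵒᵈ} (h : ¬ OrderDual.ofDual k ≤ N) :
    IsInitial ((stepTower C X N).obj k) :=
  initialIsInitial.ofIso (eqToIso (stepObj_neg C X N h).symm)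

end StepTower

section Cocone

variable {J : Type*} [Category J] {F : J ⥤ C} (c : Cocone F)

def isColimitOfIsIsoιOfFactors (j₀ : J) [IsIso (c.ι.app j₀)]
    (h : ∀ j, (∃ φ : j₀ ⟶ j, IsIso (F.map φ)) ∨ Nonempty (IsInitial (F.obj j))) :
    IsColimit c where
  desc s := inv (c.ι.app j₀) ≫ s.ι.app j₀
  fac s j := by
    obtain ⟨φ, hφ⟩ | hj := h j
    · rw [← cancel_epi (F.map φ), c.w_assoc, s.w, IsIso.hom_inv_id_assoc]
    · exact hj.some.hom_ext _ _
  uniq s f hf := by rw [← cancel_epi (c.ι.app j₀), hf, IsIso.hom_inv_id_assoc]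

def isColimitOfIsInitial (hc : IsInitial c.pt) (h : ∀ j, IsInitial (F.obj j)) : IsColimit c where
  desc s := hc.to s.pt
  fac _ j := (h j).hom_ext _ _
  uniq _ _ _ := hc.hom_ext _ _

end Cocone

theorem addFunctor_obj_le {n m : ℕ} {p : ℕᵒᵈ × ℕᵒᵈ}
    (h : OrderDual.ofDual p.1 ≤ n ∧ OrderDual.ofDual p.2 ≤ m) :
    OrderDual.ofDual (addFunctor.obj p) ≤ n + m :=
  Nat.add_le_add h.1 h.2

section Day

variable [MonoidalCategory C] [HasInitial C] {X Y Z : C} (n m : ℕ)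

theorem isIso_stepTowerTensor_map {p q : ℕᵒᵈ × ℕᵒᵈ} (f : p ⟶ q)
    (hp : OrderDual.ofDual p.1 ≤ n ∧ OrderDual.ofDual p.2 ≤ m)
    (hq : OrderDual.ofDual q.1 ≤ n ∧ OrderDual.ofDual q.2 ≤ m) :
    IsIso (((stepTower C X n).prod (stepTower C Y m) ⋙ tensor C).map f) := by
  have := isIso_stepTower_map X n f.1 hp.1 hq.1
  have := isIso_stepTower_map Y m f.2 hp.2 hq.2
  change IsIso ((stepTower C X n).map f.1 ⊗ₘ (stepTower C Y m).map f.2)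
  infer_instance

variable [∀ X : C, PreservesColimit (Functor.empty.{0} C) (tensorLeft X)]
  [∀ X : C, PreservesColimit (Functor.empty.{0} C) (tensorRight X)]

def isInitialStepTowerTensorObj (p : ℕᵒᵈ × ℕᵒᵈ)
    (h : ¬ (OrderDual.ofDual p.1 ≤ n ∧ OrderDual.ofDual p.2 ≤ m)) :
    IsInitial (((stepTower C X n).prod (stepTower C Y m) ⋙ tensor C).obj p) := by
  by_cases h₁ : OrderDual.ofDual p.1 ≤ n
  · exact (isInitialStepTowerObj Y m fun h₂ => h ⟨h₁, h₂⟩).isInitialObj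
      (tensorLeft ((stepTower C X n).obj p.1))
  · exact (isInitialStepTowerObj X n h₁).isInitialObj (tensorRight ((stepTower C Y m).obj p.2))

variable (e : X ⊗ Y ≅ Z)

def stepTowerDayUnitApp (p : ℕᵒᵈ × ℕᵒᵈ) :
    ((stepTower C X n).prod (stepTower C Y m) ⋙ tensor C).obj p ⟶
      (stepTower C Z (n + m)).obj (addFunctor.obj p) :=
  if h : OrderDual.ofDual p.1 ≤ n ∧ OrderDual.ofDual p.2 ≤ m then
    (stepTowerObjIso X n h.1 ⊗ᵢ stepTowerObjIso Y m h.2).hom ≫ e.hom ≫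
      (stepTowerObjIso Z (n + m) (addFunctor_obj_le h)).inv
  else (isInitialStepTowerTensorObj n m p h).to _

theorem stepTowerDayUnitApp_of_le (p : ℕᵒᵈ × ℕᵒᵈ)
    (h : OrderDual.ofDual p.1 ≤ n ∧ OrderDual.ofDual p.2 ≤ m) :
    stepTowerDayUnitApp n m e p = (stepTowerObjIso X n h.1 ⊗ᵢ stepTowerObjIso Y m h.2).hom ≫
      e.hom ≫ (stepTowerObjIso Z (n + m) (addFunctor_obj_le h)).inv :=
  dif_pos h

def stepTowerDayUnit : (stepTower C X n).prod (stepTower C Y m) ⋙ tensor C ⟶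
    addFunctor ⋙ stepTower C Z (n + m) where
  app := stepTowerDayUnitApp n m e
  naturality p q f := by
    by_cases hp : OrderDual.ofDual p.1 ≤ n ∧ OrderDual.ofDual p.2 ≤ m
    · have hq : OrderDual.ofDual q.1 ≤ n ∧ OrderDual.ofDual q.2 ≤ m :=
        ⟨(ofDual_le_ofDual_of_hom f.1).trans hp.1, (ofDual_le_ofDual_of_hom f.2).trans hp.2⟩
      change ((stepTower C X n).map f.1 ⊗ₘ (stepTower C Y m).map f.2) ≫ _ =
        _ ≫ (stepTower C Z (n + m)).map (addFunctor.map f)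
      rw [stepTowerDayUnitApp_of_le n m e p hp, stepTowerDayUnitApp_of_le n m e q hq,
        stepTower_map_eq X n f.1 hp.1 hq.1, stepTower_map_eq Y m f.2 hp.2 hq.2,
        stepTower_map_eq Z (n + m) _ (addFunctor_obj_le hp) (addFunctor_obj_le hq)]
      simp
    · exact (isInitialStepTowerTensorObj n m p hp).hom_ext _ _

theorem isIso_stepTowerDayUnitApp (p : ℕᵒᵈ × ℕᵒᵈ)
    (h : OrderDual.ofDual p.1 ≤ n ∧ OrderDual.ofDual p.2 ≤ m) :
    IsIso (stepTowerDayUnitApp n m e p) := by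
  rw [stepTowerDayUnitApp_of_le n m e p h]
  infer_instance

def stepTowerLeftExtension :
    Functor.LeftExtension addFunctor ((stepTower C X n).prod (stepTower C Y m) ⋙ tensor C) :=
  Functor.LeftExtension.mk (stepTower C Z (n + m)) (stepTowerDayUnit n m e)

def isPointwiseLeftKanExtensionAtStepTowerOfLe (k : ℕᵒᵈ) (hk : OrderDual.ofDual k ≤ n + m) :
    (stepTowerLeftExtension n m e).IsPointwiseLeftKanExtensionAt k := by
  let j₀ : CostructuredArrow addFunctor k :=
    CostructuredArrow.mk (Y := (OrderDual.toDual n, OrderDual.toDual m)) (homOfLE hk)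
  have : IsIso (stepTowerDayUnitApp n m e j₀.left) :=
    isIso_stepTowerDayUnitApp n m e j₀.left ⟨le_rfl, le_rfl⟩
  have : IsIso ((stepTower C Z (n + m)).map j₀.hom) := isIso_stepTower_map Z (n + m) _ le_rfl hk
  have : IsIso (((stepTowerLeftExtension n m e).coconeAt k).ι.app j₀) :=
    inferInstanceAs
      (IsIso (stepTowerDayUnitApp n m e j₀.left ≫ (stepTower C Z (n + m)).map j₀.hom))
  refine isColimitOfIsIsoιOfFactors _ j₀ fun j => ?_
  by_cases hj : OrderDual.ofDual j.left.1 ≤ n ∧ OrderDual.ofDual j.left.2 ≤ m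
  · exact .inl ⟨CostructuredArrow.homMk (homOfLE hj.1, homOfLE hj.2) (Subsingleton.elim _ _),
      isIso_stepTowerTensor_map n m _ ⟨le_rfl, le_rfl⟩ hj⟩
  · exact .inr ⟨isInitialStepTowerTensorObj n m j.left hj⟩

def isPointwiseLeftKanExtensionAtStepTowerOfNotLe (k : ℕᵒᵈ)
    (hk : ¬ OrderDual.ofDual k ≤ n + m) :
    (stepTowerLeftExtension n m e).IsPointwiseLeftKanExtensionAt k :=
  isColimitOfIsInitial _ (isInitialStepTowerObj Z (n + m) hk) fun j =>
    isInitialStepTowerTensorObj n m j.left fun hj =>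
      hk ((ofDual_le_ofDual_of_hom j.hom).trans (addFunctor_obj_le hj))

def isPointwiseLeftKanExtensionStepTower :
    (stepTowerLeftExtension n m e).IsPointwiseLeftKanExtension := fun k =>
  if hk : OrderDual.ofDual k ≤ n + m then isPointwiseLeftKanExtensionAtStepTowerOfLe n m e k hk
  else isPointwiseLeftKanExtensionAtStepTowerOfNotLe n m e k hk

def dayStepTowerIso [HasColimits C] :
    day C (stepTower C X n) (stepTower C Y m) ≅ stepTower C Z (n + m) :=
  have : (stepTower C Z (n + m)).IsLeftKanExtension (stepTowerDayUnit n m e) :=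
    (isPointwiseLeftKanExtensionStepTower n m e).isLeftKanExtension
  Functor.leftKanExtensionUnique _ (Functor.leftKanExtensionUnit addFunctor _) _
    (stepTowerDayUnit n m e)

end Day

end

/-- `S(n) ⊛ S(m) ≅ S(n+m)`: the Day convolution of the towers which are the unit `𝟙` in
degrees `≤ n` (resp. `≤ m`) and initial above. -/
theorem day_stepTower_iso [MonoidalCategory C] [SymmetricCategory C] [HasColimits C]
    [∀ X : C, PreservesColimits (tensorLeft X)] [∀ X : C, PreservesColimits (tensorRight X)]
    (n m : ℕ) :
    Nonempty (day C (stepTower C (𝟙_ C) n) (stepTower C (𝟙_ C) m) ≅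
      stepTower C (𝟙_ C) (n + m)) :=
  ⟨dayStepTowerIso n m (λ_ (𝟙_ C))⟩
end

section
/- Let C be a category admitting pushouts and all wide pushouts. Suppose given a pushout square in C with horizontal maps f : X → Y and f' : X' → Y' and left vertical map φ : X → X' (so Y' ≅ Y ⊔_X X'). Then for every n ≥ 0 the canonical morphism Cⁿ(f) ⊔_X X' → Cⁿ(f'), from the pushout along φ of the n-th term of the Čech conerve of f to the n-th term of the Čech conerve of f', is an isomorphism, and these isomorphisms are compatible with all coface and codegeneracy maps; that is, the base change along φ of the Čech conerve of f is the Čech conerve of f'. -/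
/-!
`Cⁿ(f')` is the wide pushout of `n + 1` copies of the pushout square `Y' = Y ⊔_X X'`, all sharing
the edge `φ`. Colimits commute with colimits, so the wide pushout of these squares is again a
pushout square: a cocone on `Cⁿ(f) ← X → X'` is assembled copy by copy, using the universal
property of each `Y'` and then that of the wide pushout.
-/

open CategoryTheory CategoryTheory.Limits

universe v u

namespace CategoryTheory.Limits.WidePushout

variable {C : Type u} [Category.{v} C] {J : Type*} {X X' : C} {Y Y' : J → C}
  {f : ∀ j, X ⟶ Y j} {f' : ∀ j, X' ⟶ Y' j} {φ : X ⟶ X'} {ψ : ∀ j, Y j ⟶ Y' j}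
  [HasWidePushout X Y f] [HasWidePushout X' Y' f']

theorem isPushout_desc_of_isPushout (h : ∀ j, IsPushout (f j) φ (ψ j) (f' j)) :
    IsPushout (head f) φ
      (desc (φ ≫ head f') (fun j => ψ j ≫ ι f' j) fun j => by
        rw [(h j).w_assoc, arrow_ι]) (head f') := by
  refine IsPushout.of_isColimit' ⟨head_desc _ _ _ _⟩ <|
    PushoutCocone.IsColimit.mk _
      (fun s => desc s.inr (fun j => (h j).desc (ι f j ≫ s.inl) s.inr
        (by rw [arrow_ι_assoc, s.condition])) fun j => (h j).inr_desc _ _ _)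
      (fun s => ?_) (fun s => by rw [head_desc]) (fun s m hl hr => ?_)
  · ext j
    · simp [ι_desc_assoc, ι_desc]
    · simp [head_desc_assoc, head_desc, s.condition]
  · ext j
    · apply (h j).hom_ext
      · simp [ι_desc, ← hl, ι_desc_assoc]
      · simp [ι_desc, ← hr, arrow_ι_assoc]
    · rw [head_desc, hr]

end CategoryTheory.Limits.WidePushout

theorem cechConerve_base_change_general (C : Type u) [Category.{v} C]
    [HasWidePushouts.{0} C]
    {X Y X' Y' : C} (f : X ⟶ Y) (φ : X ⟶ X') (ψ : Y ⟶ Y') (f' : X' ⟶ Y')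
    (h : IsPushout f φ ψ f') (n : SimplexCategory) :
    IsPushout
      (WidePushout.head _ : X ⟶ (Arrow.mk f).cechConerve.obj n)
      φ
      ((CosimplicialObject.cechConerve.map
        (Arrow.homMk φ ψ h.w.symm : Arrow.mk f ⟶ Arrow.mk f')).app n)
      (WidePushout.head _ : X' ⟶ (Arrow.mk f').cechConerve.obj n) :=
  WidePushout.isPushout_desc_of_isPushout fun _ => h

/-- Given a pushout square with horizontal maps `f : X ⟶ Y`, `f' : X' ⟶ Y'` and vertical
maps `φ : X ⟶ X'`, `ψ : Y ⟶ Y'`, for every `n` the square formed by the head map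
`X ⟶ Cⁿ(f)`, the map `φ`, the induced map `Cⁿ(f) ⟶ Cⁿ(f')` of Čech conerves, and the head
map `X' ⟶ Cⁿ(f')` is again a pushout: the base change along `φ` of the Čech conerve of `f`
is the Čech conerve of `f'` (compatibly with all cofaces and codegeneracies, since the
comparison maps are the components of the functorial map of Čech conerves). -/
theorem cechConerve_base_change (C : Type u) [Category.{v} C]
    [HasPushouts C] [HasWidePushouts.{0} C]
    {X Y X' Y' : C} (f : X ⟶ Y) (φ : X ⟶ X') (ψ : Y ⟶ Y') (f' : X' ⟶ Y')
    (h : IsPushout f φ ψ f') (n : SimplexCategory) :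
    IsPushout
      (WidePushout.head _ : X ⟶ (Arrow.mk f).cechConerve.obj n)
      φ
      ((CosimplicialObject.cechConerve.map
        (Arrow.homMk φ ψ h.w.symm : Arrow.mk f ⟶ Arrow.mk f')).app n)
      (WidePushout.head _ : X' ⟶ (Arrow.mk f').cechConerve.obj n) :=
  cechConerve_base_change_general C f φ ψ f' h n
end

section
/- Let Fin∗ denote the category of finite pointed sets, and call a morphism f : S → T of finite pointed sets active if the preimage of the basepoint of T is exactly the basepoint of S. For every finite pointed set S, there is an equivalence of categories between the over-category (Fin∗)_{/S} and the product (∏_{s ∈ S∖{∗}} (Fin∗)^{act}_{/⟨1⟩}) × Fin∗, where (Fin∗)^{act}_{/⟨1⟩} is the full subcategory of the over-category (Fin∗)_{/⟨1⟩} spanned by the active morphisms to the two-element pointed set ⟨1⟩ = {∗, 1}. The equivalence sends a morphism g : T → S to the tuple consisting of, for each non-basepoint s ∈ S, the induced active map g⁻¹({s})₊ → ⟨1⟩, together with the fiber g⁻¹({∗}) over the basepoint. -/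
open CategoryTheory

/-- The category `Fin∗` of finite pointed sets. -/
structure FinPtd : Type 1 where
  X : Type
  [fin : Fintype X]
  pt : X

attribute [instance] FinPtd.fin

instance : Category FinPtd where
  Hom A B := {f : A.X → B.X // f A.pt = B.pt}
  id A := ⟨id, rfl⟩
  comp f g := ⟨g.1 ∘ f.1, by simp [f.2, g.2]⟩
  id_comp f := Subtype.ext rfl
  comp_id f := Subtype.ext rfl
  assoc f g h := Subtype.ext rfl

/-- A morphism of pointed sets is active if the preimage of the basepoint is exactly the
basepoint. -/
def IsActive {A B : FinPtd} (f : A ⟶ B) : Prop := ∀ a, f.1 a = B.pt ↔ a = A.pt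

/-- The two-element pointed set `⟨1⟩ = {∗, 1}`. -/
def one : FinPtd := { X := Option PUnit, pt := none }

/-- The full subcategory of `(Fin∗)_{/⟨1⟩}` spanned by the active morphisms to `⟨1⟩`. -/
def ActOver : Type 1 := ObjectProperty.FullSubcategory (fun u : Over one => IsActive u.hom)

instance : Category ActOver := ObjectProperty.FullSubcategory.category _

/-- For `g : T → S` and `s ∈ S`, the pointed set `g⁻¹({s})₊`. -/
noncomputable def fiberPlus (S : FinPtd) (g : Over S) (s : S.X) : FinPtd :=
  letI : DecidablePred fun t : g.left.X => g.hom.1 t = s := Classical.decPred _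
  { X := Option {t : g.left.X // g.hom.1 t = s}, pt := none }

/-- The induced active map `g⁻¹({s})₊ → ⟨1⟩`. -/
noncomputable def toOne (S : FinPtd) (g : Over S) (s : S.X) : fiberPlus S g s ⟶ one :=
  ⟨fun t => t.map fun _ => PUnit.unit, rfl⟩

theorem toOne_active (S : FinPtd) (g : Over S) (s : S.X) : IsActive (toOne S g s) := by
  intro a
  cases a <;> simp [toOne, one, fiberPlus]

/-- The fiber `g⁻¹({∗})` over the basepoint, pointed by the basepoint of the source. -/
noncomputable def basepointFiber (S : FinPtd) (g : Over S) : FinPtd :=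
  letI : DecidablePred fun t : g.left.X => g.hom.1 t = S.pt := Classical.decPred _
  { X := {t : g.left.X // g.hom.1 t = S.pt}, pt := ⟨g.left.pt, g.hom.2⟩ }

/-- The tuple `((g⁻¹({s})₊ → ⟨1⟩)_{s ≠ ∗}, g⁻¹({∗}))` associated to `g : T → S`. -/
noncomputable def objTuple (S : FinPtd) (g : Over S) :
    ({s : S.X // s ≠ S.pt} → ActOver) × FinPtd :=
  (fun s => ⟨Over.mk (toOne S g s.1), toOne_active S g s.1⟩, basepointFiber S g)

/-! A pointed map `g : T → S` is the disjoint union of its fibres, and a morphism over `S` is a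
family of maps between corresponding fibres. Over a non-basepoint `s` such a map is a morphism of
`(Fin∗)^{act}_{/⟨1⟩}`, since maps in that category are exactly the pointed maps sending
non-basepoints to non-basepoints; this makes the fibre functor fully faithful. Conversely any tuple
is realised, up to isomorphism, by gluing the non-basepoints of its active components with the
pointed set over `∗`. -/

noncomputable section

open scoped Classical

namespace FinPtd

@[ext]
lemma hom_ext {A B : FinPtd} {f g : A ⟶ B} (h : ∀ a, f.1 a = g.1 a) : f = g :=
  Subtype.ext (funext h)

def isoOfEquiv {A B : FinPtd} (e : A.X ≃ B.X) (he : e A.pt = B.pt) : A ≅ B where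
  hom := ⟨e, he⟩
  inv := ⟨e.symm, e.symm_apply_eq.2 he.symm⟩
  hom_inv_id := hom_ext e.symm_apply_apply
  inv_hom_id := hom_ext e.apply_symm_apply

end FinPtd

namespace IsActive

variable {A B C : FinPtd}

lemma comp {f : A ⟶ B} {g : B ⟶ C} (hf : IsActive f) (hg : IsActive g) : IsActive (f ≫ g) :=
  fun a => (hg (f.1 a)).trans (hf a)

lemma of_injective (f : A ⟶ B) (hf : Function.Injective f.1) : IsActive f :=
  fun _ => (Eq.congr_right f.2.symm).trans hf.eq_iff

lemma map_ne_pt {f : A ⟶ B} (hf : IsActive f) {a : A.X} (ha : a ≠ A.pt) : f.1 a ≠ B.pt :=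
  fun h => ha ((hf a).1 h)

/-- `⟨1⟩` has a single non-basepoint, so an active map to it is unique. -/
lemma unique_to_one {f g : A ⟶ one} (hf : IsActive f) (hg : IsActive g) : f = g := by
  ext a
  by_cases ha : a = A.pt
  · rw [(hf a).2 ha, (hg a).2 ha]
  · rcases hfa : f.1 a with _ | ⟨⟨⟩⟩ <;> rcases hga : g.1 a with _ | ⟨⟨⟩⟩
    exacts [rfl, absurd hfa (hf.map_ne_pt ha), absurd hga (hg.map_ne_pt ha), rfl]

end IsActive

namespace ActOver

@[ext]
lemma hom_ext {u v : ActOver} {f g : u ⟶ v} (h : f.hom.left = g.hom.left) : f = g :=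
  InducedCategory.hom_ext (Over.OverMorphism.ext h)

lemma map_ne_pt {u v : ActOver} (f : u ⟶ v) {x : u.obj.left.X} (hx : x ≠ u.obj.left.pt) :
    f.hom.left.1 x ≠ v.obj.left.pt := fun h =>
  hx <| (u.property x).1 <|
    (congrArg (fun k => k.1 x) (Over.w f.hom)).symm.trans ((v.property _).2 h)

def homMk {u v : ActOver} (f : u.obj.left ⟶ v.obj.left) (hf : IsActive f) : u ⟶ v :=
  InducedCategory.homMk (Over.homMk f ((hf.comp v.property).unique_to_one u.property))

def isoOfEquiv {u v : ActOver} (e : u.obj.left.X ≃ v.obj.left.X)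
    (he : e u.obj.left.pt = v.obj.left.pt) : u ≅ v where
  hom := homMk (FinPtd.isoOfEquiv e he).hom (.of_injective _ e.injective)
  inv := homMk (FinPtd.isoOfEquiv e he).inv (.of_injective _ e.symm.injective)
  hom_inv_id := hom_ext (FinPtd.isoOfEquiv e he).hom_inv_id
  inv_hom_id := hom_ext (FinPtd.isoOfEquiv e he).inv_hom_id

end ActOver

variable {S : FinPtd}

lemma over_w_apply {g g' : Over S} (h : g ⟶ g') (t : g.left.X) :
    g'.hom.1 (h.left.1 t) = g.hom.1 t :=
  congrArg (fun k => k.1 t) (Over.w h)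

def fiberPlusMap {g g' : Over S} (h : g ⟶ g') (s : S.X) : fiberPlus S g s ⟶ fiberPlus S g' s :=
  ⟨Option.map fun t => ⟨h.left.1 t.1, (over_w_apply h t.1).trans t.2⟩, rfl⟩

lemma isActive_fiberPlusMap {g g' : Over S} (h : g ⟶ g') (s : S.X) :
    IsActive (fiberPlusMap h s) :=
  fun _ => Option.map_eq_none_iff

def basepointFiberMap {g g' : Over S} (h : g ⟶ g') : basepointFiber S g ⟶ basepointFiber S g' :=
  ⟨fun t => ⟨h.left.1 t.1, (over_w_apply h t.1).trans t.2⟩, Subtype.ext h.left.2⟩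

variable (S) in
def fiberFunctor : Over S ⥤ ({s : S.X // s ≠ S.pt} → ActOver) × FinPtd where
  obj := objTuple S
  map h := (fun s => ActOver.homMk (fiberPlusMap h s.1) (isActive_fiberPlusMap h s.1),
    basepointFiberMap h)
  map_id g := Prod.ext (funext fun _ => ActOver.hom_ext (by ext x; cases x <;> rfl)) rfl
  map_comp f g := Prod.ext (funext fun _ => ActOver.hom_ext (by ext x; cases x <;> rfl)) rfl

instance : (fiberFunctor S).Faithful where
  map_injective {g g'} h₁ h₂ he := by
    ext t
    by_cases ht : g.hom.1 t = S.pt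
    · exact congrArg (fun φ => (φ.2.1 ⟨t, ht⟩).1) he
    · exact congrArg Subtype.val <| Option.some.inj <|
        congrArg (fun φ => (φ.1 ⟨_, ht⟩).hom.left.1 (some ⟨t, rfl⟩)) he

section Glue

variable {g g' : Over S} (φ : (fiberFunctor S).obj g ⟶ (fiberFunctor S).obj g')

lemma isSome_map_some {s : {s : S.X // s ≠ S.pt}} (t : {t : g.left.X // g.hom.1 t = s.1}) :
    ((φ.1 s).hom.left.1 (some t)).isSome :=
  Option.isSome_iff_ne_none.2 (ActOver.map_ne_pt (φ.1 s) (Option.some_ne_none t))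

def glueFun (t : g.left.X) : g'.left.X :=
  if ht : g.hom.1 t = S.pt then (φ.2.1 ⟨t, ht⟩).1
  else (((φ.1 ⟨_, ht⟩).hom.left.1 (some ⟨t, rfl⟩)).get (isSome_map_some φ _)).1

lemma hom_glueFun (t : g.left.X) : g'.hom.1 (glueFun φ t) = g.hom.1 t := by
  unfold glueFun
  split_ifs with ht
  · exact (φ.2.1 ⟨t, ht⟩).2.trans ht.symm
  · exact (((φ.1 ⟨_, ht⟩).hom.left.1 (some ⟨t, rfl⟩)).get (isSome_map_some φ _)).2

lemma glueFun_pt : glueFun φ g.left.pt = g'.left.pt := by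
  rw [glueFun, dif_pos g.hom.2]
  exact congrArg Subtype.val φ.2.2

def glueHom : g ⟶ g' :=
  Over.homMk ⟨glueFun φ, glueFun_pt φ⟩ (FinPtd.hom_ext (hom_glueFun φ))

lemma map_glueHom : (fiberFunctor S).map (glueHom φ) = φ := by
  refine Prod.ext (funext fun s => ActOver.hom_ext (FinPtd.hom_ext ?_))
    (FinPtd.hom_ext fun ⟨t, ht⟩ => Subtype.ext (dif_pos ht))
  rintro (_ | ⟨t, ht⟩)
  · exact ((φ.1 s).hom.left.2).symm
  · have hs : g.hom.1 t ≠ S.pt := ht ▸ s.2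
    obtain rfl : s = ⟨_, hs⟩ := Subtype.ext ht.symm
    exact (congrArg some (Subtype.ext (dif_neg hs))).trans (Option.some_get _)

end Glue

instance : (fiberFunctor S).Full where
  map_surjective φ := ⟨glueHom φ, map_glueHom φ⟩

section EssSurj

variable (p : ({s : S.X // s ≠ S.pt} → ActOver) × FinPtd)

def ofFibersLeft : FinPtd where
  X := (Σ s : {s : S.X // s ≠ S.pt}, {x : (p.1 s).obj.left.X // x ≠ (p.1 s).obj.left.pt}) ⊕ p.2.X
  pt := Sum.inr p.2.pt

def ofFibers : Over S :=
  Over.mk (⟨Sum.elim (fun q => q.1.1) (fun _ => S.pt), rfl⟩ : ofFibersLeft p ⟶ S)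

def ofFibersFiberEquiv (s : {s : S.X // s ≠ S.pt}) :
    {t : (ofFibersLeft p).X // (ofFibers p).hom.1 t = s.1} ≃
      {x : (p.1 s).obj.left.X // x ≠ (p.1 s).obj.left.pt} :=
  haveI : IsEmpty {b : p.2.X // (ofFibers p).hom.1 (.inr b) = s.1} := ⟨fun b => s.2 b.2.symm⟩
  Equiv.subtypeSum.trans <| (Equiv.sumEmpty _ _).trans <|
    (Equiv.subtypeEquivRight fun _ => Subtype.ext_iff.symm).trans (Equiv.sigmaSubtype s)

def ofFibersBasepointFiberEquiv :
    {t : (ofFibersLeft p).X // (ofFibers p).hom.1 t = S.pt} ≃ p.2.X :=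
  haveI : IsEmpty {q // (ofFibers p).hom.1 (.inl q) = S.pt} := ⟨fun q => q.1.1.2 q.2⟩
  Equiv.subtypeSum.trans <| (Equiv.emptySum _ _).trans (Equiv.subtypeUnivEquiv fun _ => rfl)

def fiberFunctorObjOfFibersIso : (fiberFunctor S).obj (ofFibers p) ≅ p :=
  Iso.prod
    (Pi.isoMk fun s => ActOver.isoOfEquiv
      ((Equiv.optionCongr (ofFibersFiberEquiv p s)).trans (Equiv.optionSubtypeNe _)) rfl)
    (FinPtd.isoOfEquiv (ofFibersBasepointFiberEquiv p) (by rfl))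

end EssSurj

instance : (fiberFunctor S).EssSurj where
  mem_essImage p := ⟨ofFibers p, ⟨fiberFunctorObjOfFibersIso p⟩⟩

end

/-- For every finite pointed set `S`, the over-category `(Fin∗)_{/S}` is equivalent to
`(∏_{s ∈ S∖{∗}} (Fin∗)^{act}_{/⟨1⟩}) × Fin∗`, by sending `g : T → S` to the tuple of
induced active maps `g⁻¹({s})₊ → ⟨1⟩` together with the fiber over the basepoint. -/
theorem over_finPtd_decomposition (S : FinPtd) :
    ∃ E : Over S ≌ ({s : S.X // s ≠ S.pt} → ActOver) × FinPtd,
      ∀ g : Over S, E.functor.obj g = objTuple S g :=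
  haveI : (fiberFunctor S).IsEquivalence := {}
  ⟨(fiberFunctor S).asEquivalence, fun _ => rfl⟩
end
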